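/- arXiv:2404.18711 — 8 statements merged into one kernel-verified Lean document; each statement's English description precedes it below -/
import Mathlib

section
/- The Beurling–Malliavin density equals its restriction to sequences of substantial intervals whose endpoint ratios tend to 1: b(Λ) = b_{{1}}(Λ), where b_{{1}}(Λ) is the density b_A(Λ) computed with A = {1}. -/
/-!
Cut each interval `(a n, b n]` of a substantial sequence into geometric pieces of ratio
`ρ ≤ 1 + 3 ε n`; by the mediant inequality one piece has average counting density at least that
of the whole interval. Its ratio still satisfies `ρ - 1 ≥ min (b n / a n - 1) (ε n)`, and a
diagonal argument chooses `ε n → 0` so slowly that `∑ min (b n / a n - 1) (ε n) ^ 2` still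
diverges. These pieces form a substantial sequence with ratios tending to `1` that keeps every
admissible rate.
-/

open Filter Topology

/-- The counting function of the sequence `Λ`: `F_Λ(t) = #{k : Λ k ≤ t}` for `t > 0`
and `0` otherwise. -/
noncomputable def countFn (Λ : ℕ → ℝ) (t : ℝ) : ℝ :=
  if 0 < t then (Nat.card {k : ℕ | Λ k ≤ t} : ℝ) else 0

/-- A sequence of intervals `((a n, b n])_n` with `0 < a n < b n ≤ a (n+1)` is
*substantial* if `Σ (b n / a n - 1)² = ∞`. -/
def IsSubstantial (a b : ℕ → ℝ) : Prop :=
  (∀ n, 0 < a n ∧ a n < b n ∧ b n ≤ a (n + 1)) ∧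
    ¬ Summable (fun n => (b n / a n - 1) ^ 2)

/-- `limsup_n b n / a n`, taken in the extended reals. -/
noncomputable def ratioLimsup (a b : ℕ → ℝ) : EReal :=
  Filter.limsup (fun n => ((b n / a n : ℝ) : EReal)) Filter.atTop

/-- `ℓ_I = liminf_n (F_Λ(b n) - F_Λ(a n)) / (b n - a n)`, in the extended reals. -/
noncomputable def ellOf (Λ : ℕ → ℝ) (a b : ℕ → ℝ) : EReal :=
  Filter.liminf
    (fun n => (((countFn Λ (b n) - countFn Λ (a n)) / (b n - a n) : ℝ) : EReal))
    Filter.atTop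

/-- The set `𝔯_A` of admissible rates `R ≥ 0`. -/
def RSet (Λ : ℕ → ℝ) (A : Set EReal) : Set ℝ :=
  {R | 0 ≤ R ∧ ∃ a b : ℕ → ℝ, IsSubstantial a b ∧ ratioLimsup a b ∈ A ∧
    ∀ᶠ n in Filter.atTop, R ≤ (countFn Λ (b n) - countFn Λ (a n)) / (b n - a n)}

/-- The (restricted) Beurling–Malliavin density `b_A(Λ) = sup 𝔯_A`. -/
noncomputable def bmDensity (Λ : ℕ → ℝ) (A : Set EReal) : EReal :=
  sSup ((fun r : ℝ => (r : EReal)) '' RSet Λ A)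

theorem Finset.exists_sum_div_sum_le_div {ι 𝕜 : Type*} [Field 𝕜] [LinearOrder 𝕜]
    [IsStrictOrderedRing 𝕜] {s : Finset ι} (hs : s.Nonempty) (x y : ι → 𝕜)
    (hy : ∀ i ∈ s, 0 < y i) :
    ∃ i ∈ s, (∑ j ∈ s, x j) / (∑ j ∈ s, y j) ≤ x i / y i := by
  by_contra! h
  set q := (∑ j ∈ s, x j) / (∑ j ∈ s, y j)
  have hY : 0 < ∑ j ∈ s, y j := Finset.sum_pos hy hs
  have hlt : ∑ j ∈ s, x j < ∑ j ∈ s, q * y j :=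
    Finset.sum_lt_sum_of_nonempty hs fun i hi => (div_lt_iff₀ (hy i hi)).mp (h i hi)
  rw [← Finset.mul_sum, div_mul_cancel₀ _ hY.ne'] at hlt
  exact lt_irrefl _ hlt

theorem exists_slope_le_slope_succ (F : ℝ → ℝ) {c : ℕ → ℝ} (hc : StrictMono c) {m : ℕ}
    (hm : 0 < m) : ∃ i < m, slope F (c 0) (c m) ≤ slope F (c i) (c (i + 1)) := by
  obtain ⟨i, hi, hle⟩ := Finset.exists_sum_div_sum_le_div ⟨0, Finset.mem_range.mpr hm⟩
    (fun i => F (c (i + 1)) - F (c i)) (fun i => c (i + 1) - c i)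
    fun i _ => sub_pos.mpr (hc i.lt_succ_self)
  refine ⟨i, Finset.mem_range.mp hi, ?_⟩
  simpa only [slope_def_field, Finset.sum_range_sub (fun i => F (c i)),
    Finset.sum_range_sub c] using hle

theorem exists_pow_eq_of_one_lt {r ε : ℝ} (hr : 1 < r) (hε0 : 0 < ε) (hε1 : ε ≤ 1) :
    ∃ m : ℕ, 0 < m ∧
      ∃ ρ : ℝ, ρ ^ m = r ∧ ρ ≤ 1 + 3 * ε ∧ min (r - 1) ε ≤ ρ - 1 := by
  have hexists : ∃ m : ℕ, r ≤ (1 + 3 * ε) ^ m :=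
    (pow_unbounded_of_one_lt r (by linarith)).imp fun _ => le_of_lt
  obtain ⟨m, hspec, hmin⟩ :
      ∃ m, r ≤ (1 + 3 * ε) ^ m ∧ ∀ k < m, ¬ r ≤ (1 + 3 * ε) ^ k :=
    ⟨Nat.find hexists, Nat.find_spec hexists, fun _ => Nat.find_min hexists⟩
  have hm : 0 < m := Nat.pos_of_ne_zero fun h0 => by
    rw [h0, pow_zero] at hspec
    linarith
  set ρ := r ^ ((m : ℝ)⁻¹)
  have hρ0 : 0 ≤ ρ := by positivity
  have hρm : ρ ^ m = r := Real.rpow_inv_natCast_pow (by linarith) hm.ne'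
  refine ⟨m, hm, ρ, hρm, ?_, ?_⟩
  · exact le_of_pow_le_pow_left₀ hm.ne' (by linarith) (hρm ▸ hspec)
  rcases Nat.lt_or_ge m 2 with hm1 | hm2
  · obtain rfl : m = 1 := by omega
    rw [← hρm, pow_one]
    exact min_le_left _ _
  -- minimality of `m` gives `(1 + 3ε)^(m-1) < ρ^m`, hence `ρ² > 1 + 3ε ≥ (1 + ε)²`
  have hprev : (1 + 3 * ε) ^ (m - 1) < ρ ^ m :=
    hρm ▸ lt_of_not_ge (hmin (m - 1) (by omega))
  have hsq : 1 + 3 * ε < ρ ^ 2 := by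
    refine lt_of_pow_lt_pow_left₀ m (by positivity) ?_
    calc (1 + 3 * ε) ^ m ≤ (1 + 3 * ε) ^ (2 * (m - 1)) :=
          pow_le_pow_right₀ (by linarith) (by omega)
      _ = ((1 + 3 * ε) ^ (m - 1)) ^ 2 := pow_mul' _ _ _
      _ < (ρ ^ m) ^ 2 := pow_lt_pow_left₀ hprev (by positivity) two_ne_zero
      _ = (ρ ^ 2) ^ m := by rw [← pow_mul, ← pow_mul, mul_comm]
  have hρε : 1 + ε < ρ := lt_of_pow_lt_pow_left₀ 2 hρ0 (by nlinarith)
  exact (min_le_right _ _).trans (by linarith)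

theorem exists_subinterval_slope_le (F : ℝ → ℝ) {A B ε : ℝ} (hA : 0 < A) (hAB : A < B)
    (hε0 : 0 < ε) (hε1 : ε ≤ 1) :
    ∃ A' B', A ≤ A' ∧ A' < B' ∧ B' ≤ B ∧ B' / A' ≤ 1 + 3 * ε ∧
      min (B / A - 1) ε ≤ B' / A' - 1 ∧ slope F A B ≤ slope F A' B' := by
  obtain ⟨m, hm, ρ, hρm, hρ_le, hρ_ge⟩ :=
    exists_pow_eq_of_one_lt ((one_lt_div hA).mpr hAB) hε0 hε1
  have hρ1 : 1 < ρ := by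
    have : 0 < min (B / A - 1) ε := lt_min (by rw [sub_pos, one_lt_div hA]; exact hAB) hε0
    linarith
  set c : ℕ → ℝ := fun i => A * ρ ^ i
  have hc : StrictMono c := fun i j hij => mul_lt_mul_of_pos_left (pow_lt_pow_right₀ hρ1 hij) hA
  have hc0 : c 0 = A := by simp [c]
  have hcm : c m = B := by simp only [c, hρm]; field_simp
  have hratio : ∀ i, c (i + 1) / c i = ρ := fun i => by
    simp only [c, pow_succ]; field_simp
  obtain ⟨i, hi, hslope⟩ := exists_slope_le_slope_succ F hc hm
  refine ⟨c i, c (i + 1), hc0 ▸ hc.monotone (Nat.zero_le i), hc i.lt_succ_self,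
    hcm ▸ hc.monotone hi, hratio i ▸ hρ_le, hratio i ▸ hρ_ge, hc0 ▸ hcm ▸ hslope⟩

theorem exists_lt_one_le_sum_Ico {f : ℕ → ℝ} (hf0 : ∀ n, 0 ≤ f n) (hf : ¬ Summable f)
    (M : ℕ) : ∃ K, M < K ∧ 1 ≤ ∑ i ∈ Finset.Ico M K, f i := by
  have hlarge :
      ∀ᶠ K in atTop, ∑ i ∈ Finset.range M, f i + 1 ≤ ∑ i ∈ Finset.range K, f i :=
    ((not_summable_iff_tendsto_nat_atTop_of_nonneg hf0).mp hf).eventually_ge_atTop _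
  obtain ⟨K, hK, hMK⟩ := (hlarge.and (eventually_gt_atTop M)).exists
  refine ⟨K, hMK, ?_⟩
  rw [Finset.sum_Ico_eq_sub _ hMK.le]
  linarith

theorem exists_strictMono_one_le_sum_Ico {g : ℕ → ℕ → ℝ} (hg0 : ∀ j n, 0 ≤ g j n)
    (hg : ∀ j, ¬ Summable (g j)) :
    ∃ N : ℕ → ℕ, StrictMono N ∧ N 0 = 0 ∧
      ∀ j, 1 ≤ ∑ i ∈ Finset.Ico (N j) (N (j + 1)), g j i := by
  choose next hnext_gt hnext_sum using fun j => exists_lt_one_le_sum_Ico (hg0 j) (hg j)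
  let N : ℕ → ℕ := fun j => Nat.rec 0 (fun j Nj => next j Nj) j
  exact ⟨N, strictMono_nat_of_lt_succ fun j => hnext_gt j (N j), rfl,
    fun j => hnext_sum j (N j)⟩

theorem StrictMono.exists_le_lt_succ {N : ℕ → ℕ} (hN : StrictMono N) (h0 : N 0 = 0)
    (n : ℕ) :
    ∃ j, N j ≤ n ∧ n < N (j + 1) := by
  induction n with
  | zero => exact ⟨0, h0.le, h0 ▸ hN (Nat.zero_lt_one.trans_le (Nat.le_add_left 1 _))⟩
  | succ n ih =>
    obtain ⟨j, hjn, hnj⟩ := ih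
    rcases (Nat.succ_le_of_lt hnj).lt_or_eq with hlt | heq
    · exact ⟨j, hjn.trans n.le_succ, hlt⟩
    · exact ⟨j + 1, heq.ge, heq.trans_lt (hN (j + 1).lt_succ_self)⟩

theorem StrictMono.eq_of_le_lt_succ {N : ℕ → ℕ} (hN : StrictMono N) {i j n : ℕ}
    (hi : N i ≤ n ∧ n < N (i + 1)) (hj : N j ≤ n ∧ n < N (j + 1)) : i = j := by
  by_contra hne
  rcases Nat.lt_or_gt_of_ne hne with h | h
  · exact absurd ((hN.monotone h).trans hj.1) (not_le.mpr hi.2)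
  · exact absurd ((hN.monotone h).trans hi.1) (not_le.mpr hj.2)

theorem exists_tendsto_atTop_not_summable_diagonal {g : ℕ → ℕ → ℝ}
    (hg0 : ∀ j n, 0 ≤ g j n) (hg : ∀ j, ¬ Summable (g j)) :
    ∃ J : ℕ → ℕ, Tendsto J atTop atTop ∧ ¬ Summable fun n => g (J n) n := by
  obtain ⟨N, hN, hN0, hblock⟩ := exists_strictMono_one_le_sum_Ico hg0 hg
  choose J hJ using hN.exists_le_lt_succ hN0
  have hJ_eq : ∀ j n, N j ≤ n → n < N (j + 1) → J n = j :=
    fun j n h₁ h₂ => hN.eq_of_le_lt_succ (hJ n) ⟨h₁, h₂⟩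
  refine ⟨J, tendsto_atTop_atTop.mpr fun j => ⟨N j, fun n hn => ?_⟩, fun hsum => ?_⟩
  · by_contra! hlt
    exact absurd ((hJ n).2.trans_le (hN.monotone hlt)) (not_lt.mpr hn)
  -- on the `j`-th block `J = j`, so the partial sums up to `N j` are at least `j`
  have hpartial : ∀ j : ℕ, (j : ℝ) ≤ ∑ i ∈ Finset.range (N j), g (J i) i := by
    intro j
    induction j with
    | zero => simp [hN0]
    | succ j ih =>
      have hsplit := Finset.sum_Ico_consecutive (fun i => g (J i) i) (Nat.zero_le (N j))
        (hN j.lt_succ_self).le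
      have hblock_eq : ∑ i ∈ Finset.Ico (N j) (N (j + 1)), g (J i) i =
          ∑ i ∈ Finset.Ico (N j) (N (j + 1)), g j i :=
        Finset.sum_congr rfl fun i hi => by
          rw [hJ_eq j i (Finset.mem_Ico.mp hi).1 (Finset.mem_Ico.mp hi).2]
      rw [Finset.range_eq_Ico, ← hsplit, hblock_eq, ← Finset.range_eq_Ico]
      push_cast
      linarith [hblock j]
  obtain ⟨j, hj⟩ := exists_nat_gt (∑' n, g (J n) n)
  linarith [hpartial j, hsum.sum_le_tsum (Finset.range (N j)) fun i _ => hg0 (J i) i]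

theorem not_summable_min_sq {Δ : ℕ → ℝ} (h : ¬ Summable fun n => Δ n ^ 2) {ε : ℝ}
    (hε : 0 < ε) : ¬ Summable fun n => min (Δ n) ε ^ 2 := by
  intro hsum
  -- the terms tend to `0`, so eventually `min (Δ n) ε < ε`, i.e. `min (Δ n) ε = Δ n`
  have hsmall : ∀ᶠ n in atTop, min (Δ n) ε ^ 2 < ε ^ 2 :=
    hsum.tendsto_atTop_zero.eventually_lt_const (by positivity)
  refine h (hsum.congr_atTop ?_)
  filter_upwards [hsmall] with n hn
  rcases le_total (Δ n) ε with hle | hle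
  · rw [min_eq_left hle]
  · rw [min_eq_right hle] at hn
    exact absurd hn (lt_irrefl _)

theorem exists_tendsto_zero_not_summable_min_sq {Δ : ℕ → ℝ}
    (h : ¬ Summable fun n => Δ n ^ 2) :
    ∃ ε : ℕ → ℝ, (∀ n, 0 < ε n ∧ ε n ≤ 1) ∧ Tendsto ε atTop (𝓝 0) ∧
      ¬ Summable fun n => min (Δ n) (ε n) ^ 2 := by
  obtain ⟨J, hJ, hsum⟩ := exists_tendsto_atTop_not_summable_diagonal
    (g := fun j n => min (Δ n) ((1 / 2 : ℝ) ^ j) ^ 2) (fun _ _ => sq_nonneg _)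
    fun j => not_summable_min_sq h (by positivity)
  exact ⟨fun n => (1 / 2 : ℝ) ^ J n,
    fun n => ⟨by positivity, pow_le_one₀ (by norm_num) (by norm_num)⟩,
    (tendsto_pow_atTop_nhds_zero_of_lt_one (by norm_num) (by norm_num)).comp hJ, hsum⟩

theorem IsSubstantial.exists_ratio_tendsto_one {a b : ℕ → ℝ} (h : IsSubstantial a b)
    (F : ℝ → ℝ) :
    ∃ a' b', IsSubstantial a' b' ∧ Tendsto (fun n => b' n / a' n) atTop (𝓝 1) ∧
      ∀ n, slope F (a n) (b n) ≤ slope F (a' n) (b' n) := by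
  obtain ⟨hab, hdiv⟩ := h
  have hΔ : ∀ n, 0 < b n / a n - 1 := fun n =>
    sub_pos.mpr ((one_lt_div (hab n).1).mpr (hab n).2.1)
  obtain ⟨ε, hε, hε0, hdiv'⟩ := exists_tendsto_zero_not_summable_min_sq hdiv
  choose a' b' ha' hab' hb' hupper hlower hslope using fun n =>
    exists_subinterval_slope_le F (hab n).1 (hab n).2.1 (hε n).1 (hε n).2
  have ha'0 : ∀ n, 0 < a' n := fun n => (hab n).1.trans_le (ha' n)
  refine ⟨a', b',
    ⟨fun n => ⟨ha'0 n, hab' n, (hb' n).trans ((hab n).2.2.trans (ha' (n + 1)))⟩,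
      fun hsum => hdiv' ?_⟩, ?_, hslope⟩
  · exact hsum.of_nonneg_of_le (fun n => sq_nonneg _) fun n =>
      pow_le_pow_left₀ (le_min (hΔ n).le (hε n).1.le) (hlower n) 2
  · have hlim : Tendsto (fun n => 1 + 3 * ε n) atTop (𝓝 1) := by
      simpa using (hε0.const_mul 3).const_add 1
    exact tendsto_of_tendsto_of_tendsto_of_le_of_le tendsto_const_nhds hlim
      (fun n => ((one_lt_div (ha'0 n)).mpr (hab' n)).le) hupper

theorem ratioLimsup_eq_one {a b : ℕ → ℝ} (h : Tendsto (fun n => b n / a n) atTop (𝓝 1)) :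
    ratioLimsup a b = 1 :=
  (EReal.tendsto_coe.mpr h).limsup_eq

theorem RSet_subset_RSet_singleton_one (Λ : ℕ → ℝ) (A : Set EReal) :
    RSet Λ A ⊆ RSet Λ {1} := by
  rintro R ⟨hR, a, b, hsub, -, hrate⟩
  obtain ⟨a', b', hsub', hlim, hslope⟩ := hsub.exists_ratio_tendsto_one (countFn Λ)
  refine ⟨hR, a', b', hsub', ratioLimsup_eq_one hlim, ?_⟩
  filter_upwards [hrate] with n hn
  rw [← slope_def_field] at hn ⊢
  exact hn.trans (hslope n)

theorem RSet_eq_RSet_singleton_one (Λ : ℕ → ℝ) {A : Set EReal} (hA : 1 ∈ A) :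
    RSet Λ A = RSet Λ {1} :=
  (RSet_subset_RSet_singleton_one Λ A).antisymm fun _ ⟨hR, a, b, hsub, hone, hrate⟩ =>
    ⟨hR, a, b, hsub, (Set.mem_singleton_iff.mp hone) ▸ hA, hrate⟩

theorem stmt_1_general (Λ : ℕ → ℝ) :
    bmDensity Λ (Set.Ici (1 : EReal)) = bmDensity Λ {(1 : EReal)} := by
  rw [bmDensity, RSet_eq_RSet_singleton_one Λ Set.self_mem_Ici, bmDensity]

theorem stmt_1 (Λ : ℕ → ℝ) (hmono : StrictMono Λ) (h0 : 0 ≤ Λ 0)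
    (htend : Filter.Tendsto Λ Filter.atTop Filter.atTop) :
    bmDensity Λ (Set.Ici (1 : EReal)) = bmDensity Λ {(1 : EReal)} :=
  stmt_1_general Λ
end

section
/- For every real k > 1, letting A_k = [1, k], one has b(Λ) = b_{A_k}(Λ). -/
open Filter Topology

lemma not_summable_min {x : ℕ → ℝ} {c : ℝ} (hc : 0 < c) (hx : ¬ Summable x) :
    ¬ Summable (fun n => min (x n) c) := by
  intro h
  have h0 := h.tendsto_atTop_zero
  have hev : ∀ᶠ n in atTop, min (x n) c = x n := by
    filter_upwards [h0.eventually_lt_const hc] with n hn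
    rcases min_cases (x n) c with ⟨h1, _⟩ | ⟨h1, _⟩
    · exact h1
    · rw [h1] at hn; exact absurd hn (lt_irrefl c)
  obtain ⟨N, hN⟩ := eventually_atTop.mp hev
  have h1 : Summable (fun n => min (x (n + N)) c) := (summable_nat_add_iff N).mpr h
  have h2 : Summable (fun n => x (n + N)) := h1.congr (fun n => hN (n + N) (by omega))
  exact hx ((summable_nat_add_iff N).mp h2)

lemma avg_lemma (F : ℝ → ℝ) (c : ℕ → ℝ) (m : ℕ) (hm : 0 < m)
    (hc : ∀ i < m, c i < c (i + 1)) :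
    ∃ i < m, (F (c m) - F (c 0)) / (c m - c 0) ≤ (F (c (i+1)) - F (c i)) / (c (i+1) - c i) := by
  by_contra h
  push_neg at h
  have h0m : c 0 < c m := by
    have key : ∀ j, j ≤ m → 0 < j → c 0 < c j := by
      intro j
      induction j with
      | zero => intro _ h0; exact absurd h0 (lt_irrefl 0)
      | succ i ih =>
        intro hj _
        rcases Nat.eq_zero_or_pos i with h'|h'
        · subst h'; exact hc 0 (by omega)
        · exact (ih (by omega) h').trans (hc i (by omega))
    exact key m le_rfl hm
  set D := (F (c m) - F (c 0)) / (c m - c 0) with hD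
  have key : ∀ i ∈ Finset.range m, F (c (i+1)) - F (c i) < D * (c (i+1) - c i) := by
    intro i hi
    have hi' := Finset.mem_range.mp hi
    have hpos : 0 < c (i+1) - c i := sub_pos.mpr (hc i hi')
    have := h i hi'
    rwa [div_lt_iff₀ hpos] at this
  have hlt := Finset.sum_lt_sum_of_nonempty (Finset.nonempty_range_iff.mpr hm.ne') key
  rw [Finset.sum_range_sub (fun i => F (c i)), ← Finset.mul_sum,
    Finset.sum_range_sub (fun i => c i)] at hlt
  rw [hD, div_mul_cancel₀ _ (sub_pos.mpr h0m).ne'] at hlt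
  exact lt_irrefl _ hlt

lemma exists_good_sub (F : ℝ → ℝ) {k : ℝ} (hk : 1 < k) {a b : ℝ} (ha : 0 < a) (hab : a < b) :
    ∃ a' b' : ℝ, a ≤ a' ∧ a' < b' ∧ b' ≤ b ∧ b' / a' ≤ k ∧
      min (b / a - 1) (Real.exp (Real.log k / 4) - 1) ≤ b' / a' - 1 ∧
      (F b - F a) / (b - a) ≤ (F b' - F a') / (b' - a') := by
  have hL0 : 0 < Real.log k := Real.log_pos hk
  set L := Real.log k with hLdef
  have hq0 : 0 < b / a := div_pos (ha.trans hab) ha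
  have hq1 : 1 < b / a := (one_lt_div ha).mpr hab
  set x := Real.log (b / a) with hxdef
  have hx0 : 0 < x := Real.log_pos hq1
  set m := max 1 ⌈2 * x / L⌉₊ with hmdef
  have hm0 : 0 < m := lt_of_lt_of_le one_pos (le_max_left _ _)
  have hmne : (m : ℝ) ≠ 0 := Nat.cast_ne_zero.mpr hm0.ne'
  set r := Real.exp (x / m) with hrdef
  have hmR : 2 * x / L ≤ (m : ℝ) :=
    le_trans (Nat.le_ceil _) (Nat.cast_le.mpr (le_max_right _ _))
  have hr1 : 1 < r := Real.one_lt_exp_iff.mpr (div_pos hx0 (Nat.cast_pos.mpr hm0))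
  have hrk : r ≤ k := by
    have h1 : x / m ≤ L / 2 := by
      rw [div_le_div_iff₀ (Nat.cast_pos.mpr hm0) two_pos]
      rw [div_le_iff₀ hL0] at hmR
      nlinarith
    calc r ≤ Real.exp L := Real.exp_le_exp.mpr (h1.trans (by linarith))
      _ = k := Real.exp_log (by linarith)
  have hrm : r ^ m = b / a := by
    rw [hrdef, ← Real.exp_nat_mul, mul_div_cancel₀ _ hmne, hxdef, Real.exp_log hq0]
  have hmin : min (b / a - 1) (Real.exp (L / 4) - 1) ≤ r - 1 := by
    rcases le_or_gt (2 * x / L) 1 with h | h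
    · have hceil : ⌈2 * x / L⌉₊ ≤ 1 := Nat.ceil_le.mpr (by exact_mod_cast h)
      have hm1 : m = 1 := by omega
      have : r = b / a := by
        rw [hrdef, hm1, Nat.cast_one, div_one, hxdef, Real.exp_log hq0]
      rw [this]
      exact min_le_left _ _
    · have hpos : (0:ℝ) ≤ 2 * x / L := by positivity
      have hceil1 : 1 ≤ ⌈2 * x / L⌉₊ := Nat.one_le_ceil_iff.mpr (by linarith)
      have hmc : m = ⌈2 * x / L⌉₊ := by omega
      have hub : (m : ℝ) < 2 * x / L + 1 := by
        rw [hmc]; exact Nat.ceil_lt_add_one hpos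
      have hub2 : (m : ℝ) < 4 * x / L := by
        have h4 : 4 * x / L = 2 * x / L + 2 * x / L := by ring
        linarith
      have hge : L / 4 ≤ x / m := by
        rw [div_le_div_iff₀ four_pos (Nat.cast_pos.mpr hm0)]
        rw [lt_div_iff₀ hL0] at hub2
        nlinarith
      exact le_trans (min_le_right _ _) (sub_le_sub_right (Real.exp_le_exp.mpr hge) 1)
  obtain ⟨i, hi, hineq⟩ := avg_lemma F (fun i => a * r ^ i) m hm0 (by
    intro i _
    have : r ^ i < r ^ (i + 1) := pow_lt_pow_right₀ hr1 (Nat.lt_succ_self i)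
    exact mul_lt_mul_of_pos_left this ha)
  have hc0 : a * r ^ 0 = a := by simp
  have hcm : a * r ^ m = b := by
    rw [hrm]; field_simp
  have hra : 0 < a * r ^ i := by positivity
  have hratio : (a * r ^ (i+1)) / (a * r ^ i) = r := by
    rw [pow_succ, ← mul_assoc]
    exact mul_div_cancel_left₀ r hra.ne'
  refine ⟨a * r ^ i, a * r ^ (i+1), ?_, ?_, ?_, ?_, ?_, ?_⟩
  · have : (1:ℝ) ≤ r ^ i := one_le_pow₀ hr1.le
    nlinarith
  · have : r ^ i < r ^ (i + 1) := pow_lt_pow_right₀ hr1 (Nat.lt_succ_self i)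
    exact mul_lt_mul_of_pos_left this ha
  · calc a * r ^ (i+1) ≤ a * r ^ m :=
        mul_le_mul_of_nonneg_left (pow_le_pow_right₀ hr1.le hi) ha.le
      _ = b := hcm
  · rw [hratio]; exact hrk
  · rw [hratio]; exact hmin
  · simpa [hc0, hcm] using hineq

theorem stmt_2 (Λ : ℕ → ℝ) (hmono : StrictMono Λ) (h0 : 0 ≤ Λ 0)
    (htend : Filter.Tendsto Λ Filter.atTop Filter.atTop) (k : ℝ) (hk : 1 < k) :
    bmDensity Λ (Set.Ici (1 : EReal)) = bmDensity Λ (Set.Icc (1 : EReal) (k : EReal)) := by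
  have hset : RSet Λ (Set.Ici (1 : EReal)) = RSet Λ (Set.Icc (1 : EReal) (k : EReal)) := by
    apply Set.Subset.antisymm
    · rintro R ⟨hR0, a, b, hsub, -, hrate⟩
      have H := fun n => exists_good_sub (countFn Λ) hk (hsub.1 n).1 (hsub.1 n).2.1
      choose a' b' h1 h2 h3 h4 h5 h6 using H
      set e := Real.exp (Real.log k / 4) with hedef
      have he : 1 < e := Real.one_lt_exp_iff.mpr (div_pos (Real.log_pos hk) four_pos)
      have ha'pos : ∀ n, 0 < a' n := fun n => (hsub.1 n).1.trans_le (h1 n)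
      have hr1 : ∀ n, 1 < b' n / a' n := fun n => (one_lt_div (ha'pos n)).mpr (h2 n)
      refine ⟨hR0, a', b', ⟨fun n => ⟨ha'pos n, h2 n, ?_⟩, ?_⟩, ⟨?_, ?_⟩, ?_⟩
      · exact (h3 n).trans ((hsub.1 n).2.2.trans (h1 (n+1)))
      · -- not summable
        intro hs
        apply not_summable_min (x := fun n => (b n / a n - 1) ^ 2)
          (c := (e - 1) ^ 2) (pow_pos (by linarith) 2) hsub.2
        apply Summable.of_nonneg_of_le (fun n => le_min (sq_nonneg _) (sq_nonneg _)) _ hs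
        intro n
        have hq1 : 1 < b n / a n := (one_lt_div (hsub.1 n).1).mpr (hsub.1 n).2.1
        rcases le_total (b n / a n - 1) (e - 1) with h | h
        · calc min ((b n / a n - 1)^2) ((e-1)^2) ≤ (b n / a n - 1)^2 := min_le_left _ _
            _ ≤ (b' n / a' n - 1)^2 := by
                apply pow_le_pow_left₀ (by linarith)
                exact le_trans (by rw [min_eq_left h]) (h5 n)
        · calc min ((b n / a n - 1)^2) ((e-1)^2) ≤ (e-1)^2 := min_le_right _ _
            _ ≤ (b' n / a' n - 1)^2 := by
                apply pow_le_pow_left₀ (by linarith)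
                exact le_trans (by rw [min_eq_right h]) (h5 n)
      · -- 1 ≤ limsup
        refine Filter.le_limsup_of_frequently_le (Filter.Eventually.frequently ?_)
          (by isBoundedDefault)
        filter_upwards with n
        exact_mod_cast (hr1 n).le
      · -- limsup ≤ k
        refine Filter.limsup_le_of_le (by isBoundedDefault) ?_
        filter_upwards with n
        exact_mod_cast h4 n
      · filter_upwards [hrate] with n hn
        exact hn.trans (h6 n)
    · rintro R ⟨hR0, a, b, hsub, hmem, hrate⟩
      exact ⟨hR0, a, b, hsub, hmem.1, hrate⟩
  unfold bmDensity
  rw [hset]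
end

section
/- Fix k > 1 and set A_k = [1,k]. For every substantial sequence of intervals I = ((a_n, b_n])_{n≥1} ∈ 𝔠 there exists a substantial sequence J = ((c_n, d_n])_{n≥1} ∈ 𝔠_{A_k} such that ℓ_J ≥ ℓ_I; moreover J can be chosen so that the limit lim_{n→∞} d_n/c_n exists and belongs to A_k. -/
open Filter Topology

lemma pigeon (m : ℕ) (hm : 0 < m) (x y : ℕ → ℝ) :
    ∃ i < m, (∑ j ∈ Finset.range m, x j) * y i ≤ x i * ∑ j ∈ Finset.range m, y j := by
  by_contra hcon
  push_neg at hcon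
  have h1 : ∑ i ∈ Finset.range m, (x i * ∑ j ∈ Finset.range m, y j)
      < ∑ i ∈ Finset.range m, ((∑ j ∈ Finset.range m, x j) * y i) :=
    Finset.sum_lt_sum_of_nonempty ⟨0, Finset.mem_range.2 hm⟩
      (fun i hi => hcon i (Finset.mem_range.1 hi))
  rw [← Finset.sum_mul, ← Finset.mul_sum] at h1
  exact lt_irrefl _ h1

lemma exists_piece (Λ : ℕ → ℝ) (k : ℝ) (hk : 1 < k)
    (a b : ℝ) (ha : 0 < a) (hab : a < b) :
    ∃ c d : ℝ, a ≤ c ∧ c < d ∧ d ≤ b ∧ d / c ≤ k ∧ min (b / a) (Real.sqrt k) ≤ d / c ∧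
      (countFn Λ b - countFn Λ a) / (b - a) ≤ (countFn Λ d - countFn Λ c) / (d - c) := by
  set r := b / a with hrdef
  have hr1 : 1 < r := (one_lt_div ha).2 hab
  have hrpos : (0:ℝ) < r := lt_trans one_pos hr1
  set m : ℕ := ⌈Real.logb k r⌉₊ with hmdef
  have hlogpos : 0 < Real.logb k r := Real.logb_pos hk hr1
  have hm1 : 1 ≤ m := Nat.one_le_ceil_iff.2 hlogpos
  have hmpos : (0:ℝ) < (m:ℝ) := by exact_mod_cast hm1
  set q : ℝ := r ^ ((m:ℝ)⁻¹) with hqdef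
  have hqpos : 0 < q := Real.rpow_pos_of_pos hrpos _
  have hq1 : 1 < q := (Real.one_lt_rpow_iff_of_pos hrpos).2 (Or.inl ⟨hr1, by positivity⟩)
  have hqm : q ^ m = r := by
    rw [hqdef, ← Real.rpow_natCast (r ^ ((m:ℝ)⁻¹)) m, ← Real.rpow_mul hrpos.le,
      inv_mul_cancel₀ (ne_of_gt hmpos), Real.rpow_one]
  have hqk : q ≤ k := by
    have h1 : r ≤ k ^ (m:ℝ) := (Real.logb_le_iff_le_rpow hk hrpos).1 (Nat.le_ceil _)
    calc q ≤ (k ^ (m:ℝ)) ^ ((m:ℝ)⁻¹) := Real.rpow_le_rpow hrpos.le h1 (by positivity)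
    _ = k := by
        rw [← Real.rpow_mul (by linarith : (0:ℝ) ≤ k), mul_inv_cancel₀ (ne_of_gt hmpos),
          Real.rpow_one]
  have hqlow : min r (Real.sqrt k) ≤ q := by
    rcases eq_or_lt_of_le hm1 with h1 | h2
    · have hqr : q = r := by
        rw [hqdef, ← h1]
        norm_num
      rw [hqr]
      exact min_le_left _ _
    · have hlt : ((m - 1 : ℕ) : ℝ) < Real.logb k r := Nat.lt_ceil.1 (by omega)
      have hklt : k ^ (((m - 1 : ℕ)):ℝ) < r := (Real.lt_logb_iff_rpow_lt hk hrpos).1 hlt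
      have hcast : ((m - 1 : ℕ) : ℝ) = (m:ℝ) - 1 := by
        have : 1 ≤ m := hm1
        push_cast [Nat.cast_sub this]
        ring
      have hsq : Real.sqrt k ≤ q := by
        rw [Real.sqrt_eq_rpow]
        have hexp : (1/2 : ℝ) ≤ ((m:ℝ) - 1) * (m:ℝ)⁻¹ := by
          have hm2 : (2:ℝ) ≤ (m:ℝ) := by exact_mod_cast h2
          have hi : (m:ℝ)⁻¹ ≤ 2⁻¹ := by
            apply inv_anti₀ (by norm_num) hm2
          have hmm : (m:ℝ) * (m:ℝ)⁻¹ = 1 := mul_inv_cancel₀ (ne_of_gt hmpos)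
          nlinarith [inv_pos.2 hmpos]
        calc k ^ (1/2 : ℝ) ≤ k ^ (((m:ℝ) - 1) * (m:ℝ)⁻¹) :=
              Real.rpow_le_rpow_of_exponent_le hk.le hexp
        _ = (k ^ ((m:ℝ) - 1)) ^ ((m:ℝ)⁻¹) := Real.rpow_mul (by linarith) _ _
        _ ≤ q := by
            apply Real.rpow_le_rpow (Real.rpow_nonneg (by linarith) _) _ (by positivity)
            rw [← hcast]
            exact hklt.le
      exact le_trans (min_le_right _ _) hsq
  -- geometric pieces
  set t : ℕ → ℝ := fun i => a * q ^ i with htdef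
  have htpos : ∀ i, 0 < t i := fun i => by positivity
  have htlt : ∀ i, t i < t (i + 1) := by
    intro i
    have : t (i+1) = t i * q := by rw [htdef]; ring
    rw [this]
    exact lt_mul_of_one_lt_right (htpos i) hq1
  have htSM : StrictMono t := strictMono_nat_of_lt_succ htlt
  have ht0 : t 0 = a := by simp [htdef]
  have htm : t m = b := by
    rw [htdef]
    simp only [hqm, hrdef]
    field_simp
  obtain ⟨i, him, hineq⟩ := pigeon m hm1 (fun j => countFn Λ (t (j+1)) - countFn Λ (t j))
    (fun j => t (j+1) - t j)
  rw [Finset.sum_range_sub (fun j => countFn Λ (t j)), Finset.sum_range_sub t, ht0, htm] at hineq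
  have hdc : t (i+1) / t i = q := by
    rw [htdef]
    field_simp
    ring
  refine ⟨t i, t (i+1), ?_, htlt i, ?_, ?_, ?_, ?_⟩
  · rw [← ht0]; exact htSM.monotone (Nat.zero_le i)
  · rw [← htm]; exact htSM.monotone him
  · rw [hdc]; exact hqk
  · rw [hdc]; exact hqlow
  · rw [div_le_div_iff₀ (by linarith) (sub_pos.2 (htlt i))]
    exact hineq

theorem stmt_3 (Λ : ℕ → ℝ) (hmono : StrictMono Λ) (h0 : 0 ≤ Λ 0)
    (htend : Filter.Tendsto Λ Filter.atTop Filter.atTop) (k : ℝ) (hk : 1 < k)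
    (a b : ℕ → ℝ) (hI : IsSubstantial a b) :
    ∃ c d : ℕ → ℝ, IsSubstantial c d ∧
      ratioLimsup c d ∈ Set.Icc (1 : EReal) (k : EReal) ∧
      ellOf Λ a b ≤ ellOf Λ c d ∧
      ∃ L : ℝ, L ∈ Set.Icc (1 : ℝ) k ∧
        Filter.Tendsto (fun n => d n / c n) Filter.atTop (nhds L) := by
  obtain ⟨hab, hsub⟩ := hI
  have haSM : StrictMono a :=
    strictMono_nat_of_lt_succ (fun n => lt_of_lt_of_le (hab n).2.1 (hab n).2.2)
  choose c0 d0 hc0 hcd0 hd0 hk0 hmin0 hdens0 using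
    fun n => exists_piece Λ k hk (a n) (b n) (hab n).1 (hab n).2.1
  set ρ : ℕ → ℝ := fun n => d0 n / c0 n with hρdef
  have hc0pos : ∀ n, 0 < c0 n := fun n => lt_of_lt_of_le (hab n).1 (hc0 n)
  have hρ1 : ∀ n, 1 < ρ n := fun n => (one_lt_div (hc0pos n)).2 (hcd0 n)
  have hρk : ∀ n, ρ n ≤ k := hk0
  -- the common construction given a subsequence along which ρ converges
  have main : ∀ Φ : ℕ → ℕ, StrictMono Φ → ∀ L : ℝ, L ∈ Set.Icc (1:ℝ) k →
      Tendsto (fun n => ρ (Φ n)) atTop (nhds L) →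
      ¬ Summable (fun n => (ρ (Φ n) - 1) ^ 2) →
      ∃ c d : ℕ → ℝ, IsSubstantial c d ∧
        ratioLimsup c d ∈ Set.Icc (1 : EReal) (k : EReal) ∧
        ellOf Λ a b ≤ ellOf Λ c d ∧
        ∃ L : ℝ, L ∈ Set.Icc (1 : ℝ) k ∧
          Filter.Tendsto (fun n => d n / c n) Filter.atTop (nhds L) := by
    intro Φ hΦ L hL htL hns
    refine ⟨fun n => c0 (Φ n), fun n => d0 (Φ n), ⟨?_, hns⟩, ?_, ?_, L, hL, htL⟩
    · intro n
      refine ⟨hc0pos (Φ n), hcd0 (Φ n), ?_⟩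
      calc d0 (Φ n) ≤ b (Φ n) := hd0 (Φ n)
      _ ≤ a (Φ n + 1) := (hab (Φ n)).2.2
      _ ≤ a (Φ (n + 1)) := haSM.monotone (hΦ (Nat.lt_succ_self n))
      _ ≤ c0 (Φ (n + 1)) := hc0 _
    · have htE : Tendsto (fun n => ((ρ (Φ n) : ℝ) : EReal)) atTop (nhds ((L : ℝ) : EReal)) :=
        (continuous_coe_real_ereal.tendsto L).comp htL
      have : ratioLimsup (fun n => c0 (Φ n)) (fun n => d0 (Φ n)) = ((L : ℝ) : EReal) :=
        htE.limsup_eq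
      rw [this]
      constructor
      · rw [show (1 : EReal) = ((1:ℝ) : EReal) from rfl]
        exact EReal.coe_le_coe_iff.2 hL.1
      · exact EReal.coe_le_coe_iff.2 hL.2
    · have h1 : ellOf Λ a b ≤
          Filter.liminf (fun n => (((countFn Λ (b (Φ n)) - countFn Λ (a (Φ n))) /
            (b (Φ n) - a (Φ n)) : ℝ) : EReal)) atTop := by
        rw [ellOf]
        have := Filter.liminf_le_liminf_of_le (f := atTop) (g := Filter.map Φ atTop)
          (u := fun n => (((countFn Λ (b n) - countFn Λ (a n)) / (b n - a n) : ℝ) : EReal))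
          hΦ.tendsto_atTop
        rwa [← Filter.liminf_comp] at this
      refine le_trans h1 ?_
      rw [ellOf]
      exact Filter.liminf_le_liminf (Filter.Eventually.of_forall
        (fun n => EReal.coe_le_coe_iff.2 (hdens0 (Φ n))))
  by_cases hconv : Tendsto ρ atTop (nhds 1)
  · refine main id strictMono_id 1 ⟨le_refl 1, hk.le⟩ hconv ?_
    intro hsum
    apply hsub
    have hsk : (1:ℝ) < Real.sqrt k := by
      rw [show (1:ℝ) = Real.sqrt 1 from (Real.sqrt_one).symm]
      exact Real.sqrt_lt_sqrt (by norm_num) hk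
    have hev : ∀ᶠ n in atTop, (b n / a n - 1) ^ 2 ≤ (ρ n - 1) ^ 2 := by
      have h1 : ∀ᶠ n in atTop, ρ n < Real.sqrt k :=
        hconv.eventually_lt_const hsk
      filter_upwards [h1] with n hn
      have hba : b n / a n ≤ ρ n := by
        rcases le_total (b n / a n) (Real.sqrt k) with h | h
        · have := hmin0 n
          rwa [min_eq_left h] at this
        · have := hmin0 n
          rw [min_eq_right h] at this
          linarith
      have h1' : (1:ℝ) < b n / a n := (one_lt_div (hab n).1).2 (hab n).2.1
      apply pow_le_pow_left₀ (by linarith) (by linarith)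
    obtain ⟨N, hN⟩ := eventually_atTop.1 hev
    rw [← summable_nat_add_iff N]
    apply Summable.of_nonneg_of_le (fun n => sq_nonneg _) (fun n => hN (n + N) (Nat.le_add_left _ _))
    exact (summable_nat_add_iff N).2 hsum
  · have hfr : ∃ ε > 0, ∃ᶠ n in atTop, 1 + ε ≤ ρ n := by
      rw [Metric.tendsto_atTop] at hconv
      push_neg at hconv
      obtain ⟨ε, hε, hfreq⟩ := hconv
      refine ⟨ε, hε, ?_⟩
      rw [frequently_atTop]
      intro N
      obtain ⟨n, hnN, hd⟩ := hfreq N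
      refine ⟨n, hnN, ?_⟩
      rw [Real.dist_eq, abs_of_nonneg (by linarith [hρ1 n])] at hd
      linarith
    obtain ⟨ε, hε, hfr⟩ := hfr
    obtain ⟨φ, hφ, hφε⟩ := Filter.extraction_of_frequently_atTop hfr
    have hmem : ∀ n, ρ (φ n) ∈ Set.Icc (1 + ε) k := fun n => ⟨hφε n, hρk _⟩
    obtain ⟨L, hLmem, ψ, hψ, htend'⟩ := (isCompact_Icc).tendsto_subseq hmem
    refine main (φ ∘ ψ) (hφ.comp hψ) L ⟨by linarith [hLmem.1], hLmem.2⟩ htend' ?_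
    intro hsum
    have h0' := hsum.tendsto_atTop_zero
    have hlow : ∀ n, ε ^ 2 ≤ (ρ (φ (ψ n)) - 1) ^ 2 := fun n =>
      pow_le_pow_left₀ hε.le (by linarith [hφε (ψ n)]) 2
    have hlt : ∀ᶠ n in atTop, (ρ (φ (ψ n)) - 1) ^ 2 < ε ^ 2 := by
      exact h0'.eventually_lt_const (by positivity)
    obtain ⟨n, hn⟩ := hlt.exists
    linarith [hlow n]
end

section
/- If A is a subset of the extended interval [1,+∞] containing the point 1, then b_A(Λ) = b(Λ). -/
open Filter Topology

/-!
Only `𝔯_{[1,∞]} ⊆ 𝔯_A` needs an argument: a substantial sequence of intervals on which the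
slopes of `F_Λ` are eventually `≥ R` must be replaced by one with `b'ₙ / a'ₙ → 1` and the same
property. Cut `(aₙ, bₙ]` geometrically into the least number of pieces of ratio `ρₙ ≤ 1 + δₙ`.
The slope over `(aₙ, bₙ]` is an average of the slopes over the pieces, so one piece keeps
slope `≥ R`; `δₙ → 0` forces `ρₙ → 1`; and minimality of the number of pieces gives
`(ρₙ - 1)² ≥ min ((bₙ/aₙ - 1)², δₙ²) / 16`. Substantiality survives because `δₙ²` can be taken to
decay so slowly that `Σ min ((bₙ/aₙ - 1)², δₙ²)` still diverges: cap the `n`-th term by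
`1 / (1 + Sₙ)`, where `Sₙ` is the capped sum so far.
-/

theorem summable_of_summable_min {x : ℕ → ℝ} {c : ℝ} (hc : 0 < c)
    (h : Summable fun n => min (x n) c) : Summable x := by
  refine h.congr_atTop ?_
  filter_upwards [h.tendsto_atTop_zero.eventually_lt_const hc] with n hn
  exact min_eq_left (not_lt.1 fun hcx => hn.ne (min_eq_right hcx.le))

noncomputable def slowSum (x : ℕ → ℝ) : ℕ → ℝ
  | 0 => 0
  | n + 1 => slowSum x n + min (x n) (1 + slowSum x n)⁻¹

theorem slowSum_eq_sum (x : ℕ → ℝ) (n : ℕ) :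
    slowSum x n = ∑ i ∈ Finset.range n, min (x i) (1 + slowSum x i)⁻¹ := by
  induction n with
  | zero => rfl
  | succ n ih => rw [Finset.sum_range_succ, ← ih, slowSum]

theorem slowSum_nonneg {x : ℕ → ℝ} (hx : ∀ n, 0 ≤ x n) (n : ℕ) : 0 ≤ slowSum x n := by
  induction n with
  | zero => exact le_rfl
  | succ n ih =>
    rw [slowSum]
    exact add_nonneg ih (le_min (hx n) (by positivity))

theorem exists_tendsto_zero_not_summable_min {x : ℕ → ℝ} (hx : ∀ n, 0 ≤ x n)
    (hs : ¬ Summable x) :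
    ∃ ε : ℕ → ℝ, (∀ n, 0 < ε n ∧ ε n ≤ 1) ∧ Tendsto ε atTop (𝓝 0) ∧
      ¬ Summable fun n => min (x n) (ε n) := by
  have hS0 := slowSum_nonneg hx
  have hterm : ∀ n, 0 ≤ min (x n) (1 + slowSum x n)⁻¹ :=
    fun n => le_min (hx n) (by have := hS0 n; positivity)
  have hdiv : ¬ Summable fun n => min (x n) (1 + slowSum x n)⁻¹ := by
    -- otherwise the caps stay above `(1 + M)⁻¹`, `M` the sum, and `x` itself is summable
    intro hsum
    set M := ∑' n, min (x n) (1 + slowSum x n)⁻¹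
    have hSM : ∀ n, slowSum x n ≤ M := fun n => by
      rw [slowSum_eq_sum]; exact hsum.sum_le_tsum _ (fun i _ => hterm i)
    have hM0 : 0 ≤ M := (hS0 0).trans (hSM 0)
    refine hs (summable_of_summable_min (c := (1 + M)⁻¹) (by positivity) ?_)
    refine hsum.of_nonneg_of_le (fun n => le_min (hx n) (by positivity)) fun n => ?_
    gcongr
    · exact add_pos_of_pos_of_nonneg one_pos (hS0 n)
    · exact hSM n
  have hS : Tendsto (slowSum x) atTop atTop := by
    simpa only [← slowSum_eq_sum] using
      (not_summable_iff_tendsto_nat_atTop_of_nonneg hterm).1 hdiv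
  refine ⟨fun n => (1 + slowSum x n)⁻¹, fun n => ⟨by have := hS0 n; positivity, ?_⟩,
    (tendsto_atTop_add_const_left _ 1 hS).inv_tendsto_atTop, hdiv⟩
  exact inv_le_one_of_one_le₀ (le_add_of_nonneg_right (hS0 n))

-- `m = ⌈log r / log (1 + δ)⌉₊` is the least `m` with `r ^ (1 / m) ≤ 1 + δ`; if `m ≥ 2`, then
-- `log ρ ≥ log (1 + δ) / 2 ≥ δ / 4`.
theorem exists_pow_eq_le_one_add {r δ : ℝ} (hr : 1 < r) (hδ0 : 0 < δ) (hδ1 : δ ≤ 1) :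
    ∃ (m : ℕ) (ρ : ℝ), 0 < m ∧ 1 < ρ ∧ ρ ^ m = r ∧ ρ ≤ 1 + δ ∧
      min (r - 1) δ ≤ 4 * (ρ - 1) := by
  set L := Real.log r
  set μ := Real.log (1 + δ)
  have hL : 0 < L := Real.log_pos hr
  have hμ : 0 < μ := Real.log_pos (by linarith)
  set m := ⌈L / μ⌉₊
  have hm : 0 < m := Nat.ceil_pos.2 (div_pos hL hμ)
  have hm' : (0 : ℝ) < m := Nat.cast_pos.2 hm
  refine ⟨m, Real.exp (L / m), hm, Real.one_lt_exp_iff.2 (div_pos hL hm'), ?_, ?_, ?_⟩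
  · rw [← Real.exp_nat_mul, mul_div_cancel₀ _ hm'.ne', Real.exp_log (by linarith)]
  · rw [← Real.exp_log (show 0 < 1 + δ by linarith), Real.exp_le_exp, div_le_iff₀ hm',
      ← div_le_iff₀' hμ]
    exact Nat.le_ceil _
  · rcases (Nat.one_le_iff_ne_zero.2 hm.ne').eq_or_lt with hm1 | hm2
    · rw [← hm1, Nat.cast_one, div_one, Real.exp_log (by linarith)]
      linarith [min_le_left (r - 1) δ]
    · have hceil : (m : ℝ) < L / μ + 1 := Nat.ceil_lt_add_one (div_pos hL hμ).le
      have hm2' : (2 : ℝ) ≤ m := by exact_mod_cast hm2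
      have hμL : μ / 2 ≤ L / m := by
        have hL' : ((m : ℝ) - 1) * μ < L := (lt_div_iff₀ hμ).1 (by linarith)
        rw [div_le_div_iff₀ two_pos hm']
        nlinarith
      have hδμ : δ / 2 ≤ μ := by
        have h2 : δ / 2 ≤ 1 - (1 + δ)⁻¹ := by
          rw [show 1 - (1 + δ)⁻¹ = δ / (1 + δ) by field_simp; ring]
          exact div_le_div_of_nonneg_left hδ0.le (by linarith) (by linarith)
        linarith [Real.one_sub_inv_le_log_of_pos (show 0 < 1 + δ by linarith)]
      linarith [Real.add_one_le_exp (L / m), min_le_right (r - 1) δ]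

theorem exists_le_slope_succ (F : ℝ → ℝ) {c : ℕ → ℝ} (hc : StrictMono c) {m : ℕ}
    (hm : 0 < m) {R : ℝ} (h : R ≤ slope F (c 0) (c m)) :
    ∃ j < m, R ≤ slope F (c j) (c (j + 1)) := by
  rw [slope_def_field, le_div_iff₀ (sub_pos.2 (hc hm)), ← Finset.sum_range_sub (fun j => F (c j)),
    ← Finset.sum_range_sub, Finset.mul_sum] at h
  obtain ⟨j, hj, hle⟩ := Finset.exists_le_of_sum_le (Finset.nonempty_range_iff.2 hm.ne') h
  exact ⟨j, Finset.mem_range.1 hj, by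
    rwa [slope_def_field, le_div_iff₀ (sub_pos.2 (hc (Nat.lt_succ_self j)))]⟩

theorem exists_subinterval_ratio_le (F : ℝ → ℝ) (R : ℝ) {a b δ : ℝ} (ha : 0 < a)
    (hab : a < b) (hδ0 : 0 < δ) (hδ1 : δ ≤ 1) :
    ∃ a' b', a ≤ a' ∧ a' < b' ∧ b' ≤ b ∧ b' / a' ≤ 1 + δ ∧
      min (b / a - 1) δ ≤ 4 * (b' / a' - 1) ∧ (R ≤ slope F a b → R ≤ slope F a' b') := by
  obtain ⟨m, ρ, hm, hρ1, hρm, hρδ, hρmin⟩ :=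
    exists_pow_eq_le_one_add ((one_lt_div ha).2 hab) hδ0 hδ1
  set c : ℕ → ℝ := fun j => a * ρ ^ j
  have hc : StrictMono c := fun i j hij => mul_lt_mul_of_pos_left (pow_lt_pow_right₀ hρ1 hij) ha
  have hc0 : c 0 = a := by simp [c]
  have hcm : c m = b := by simp only [c, hρm]; field_simp
  have hratio : ∀ j, c (j + 1) / c j = ρ := fun j => by
    simp only [c, pow_succ]; field_simp
  obtain ⟨j, hj, hslope⟩ : ∃ j < m, R ≤ slope F a b → R ≤ slope F (c j) (c (j + 1)) := by
    by_cases hR : R ≤ slope F a b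
    · rw [← hc0, ← hcm] at hR
      obtain ⟨j, hj, hle⟩ := exists_le_slope_succ F hc hm hR
      exact ⟨j, hj, fun _ => hle⟩
    · exact ⟨0, hm, fun h => absurd h hR⟩
  refine ⟨c j, c (j + 1), hc0 ▸ hc.monotone (Nat.zero_le j), hc (Nat.lt_succ_self j),
    hcm ▸ hc.monotone hj, ?_, ?_, hslope⟩
  · rwa [hratio]
  · rwa [hratio]

theorem IsSubstantial.exists_ratioLimsup_eq_one (F : ℝ → ℝ) (R : ℝ) {a b : ℕ → ℝ}
    (hab : IsSubstantial a b) (hR : ∀ᶠ n in atTop, R ≤ slope F (a n) (b n)) :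
    ∃ a' b', IsSubstantial a' b' ∧ ratioLimsup a' b' = 1 ∧
      ∀ᶠ n in atTop, R ≤ slope F (a' n) (b' n) := by
  obtain ⟨hord, hdiv⟩ := hab
  obtain ⟨ε, hε, hε0, hεdiv⟩ := exists_tendsto_zero_not_summable_min (fun n => sq_nonneg _) hdiv
  have hδ : ∀ n, 0 < √(ε n) ∧ √(ε n) ≤ 1 :=
    fun n => ⟨Real.sqrt_pos.2 (hε n).1, Real.sqrt_le_one.2 (hε n).2⟩
  choose a' b' haa' hab' hbb' hratio hmin hslope using fun n =>
    exists_subinterval_ratio_le F R (hord n).1 (hord n).2.1 (hδ n).1 (hδ n).2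
  have hord' : ∀ n, 0 < a' n ∧ a' n < b' n ∧ b' n ≤ a' (n + 1) := fun n =>
    ⟨(hord n).1.trans_le (haa' n), hab' n, (hbb' n).trans ((hord n).2.2.trans (haa' (n + 1)))⟩
  have hratio1 : ∀ n, 1 < b' n / a' n := fun n => (one_lt_div (hord' n).1).2 (hab' n)
  have hcap : ∀ n, min ((b n / a n - 1) ^ 2) (ε n) ≤ 16 * (b' n / a' n - 1) ^ 2 := by
    intro n
    have hmin0 : 0 ≤ min (b n / a n - 1) √(ε n) :=
      le_min (sub_nonneg.2 ((one_lt_div (hord n).1).2 (hord n).2.1).le) (hδ n).1.le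
    calc min ((b n / a n - 1) ^ 2) (ε n)
        ≤ min (b n / a n - 1) √(ε n) ^ 2 := by
          rcases min_choice (b n / a n - 1) √(ε n) with h | h <;> rw [h]
          · exact min_le_left _ _
          · rw [Real.sq_sqrt (hε n).1.le]; exact min_le_right _ _
      _ ≤ (4 * (b' n / a' n - 1)) ^ 2 := pow_le_pow_left₀ hmin0 (hmin n) 2
      _ = 16 * (b' n / a' n - 1) ^ 2 := by ring
  have hdiv' : ¬ Summable fun n => (b' n / a' n - 1) ^ 2 := fun hsum =>
    hεdiv <| (hsum.mul_left 16).of_nonneg_of_le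
      (fun n => le_min (sq_nonneg _) (hε n).1.le) hcap
  have hupper : Tendsto (fun n => 1 + √(ε n)) atTop (𝓝 1) := by
    simpa using (Real.continuous_sqrt.tendsto 0).comp hε0 |>.const_add 1
  have hratio_tendsto : Tendsto (fun n => b' n / a' n) atTop (𝓝 1) :=
    tendsto_of_tendsto_of_tendsto_of_le_of_le tendsto_const_nhds hupper
      (fun n => (hratio1 n).le) hratio
  refine ⟨a', b', ⟨hord', hdiv'⟩, ?_, hR.mono fun n => hslope n⟩
  exact ((continuous_coe_real_ereal.tendsto 1).comp hratio_tendsto).limsup_eq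

theorem RSet_mono (Λ : ℕ → ℝ) {A B : Set EReal} (h : A ⊆ B) : RSet Λ A ⊆ RSet Λ B :=
  fun _ ⟨hR0, a, b, hab, hA, hR⟩ => ⟨hR0, a, b, hab, h hA, hR⟩

theorem RSet_subset_of_one_mem (Λ : ℕ → ℝ) {A B : Set EReal} (h1 : (1 : EReal) ∈ B) :
    RSet Λ A ⊆ RSet Λ B := by
  rintro R ⟨hR0, a, b, hab, -, hR⟩
  simp only [← slope_def_field] at hR
  obtain ⟨a', b', hab', hlim, hR'⟩ := hab.exists_ratioLimsup_eq_one (countFn Λ) R hR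
  exact ⟨hR0, a', b', hab', hlim ▸ h1, by simpa only [slope_def_field] using hR'⟩

theorem stmt_5_general (Λ : ℕ → ℝ) (A : Set EReal) (hA : A ⊆ Set.Ici (1 : EReal))
    (h1 : (1 : EReal) ∈ A) :
    bmDensity Λ A = bmDensity Λ (Set.Ici (1 : EReal)) := by
  rw [bmDensity, bmDensity, (RSet_mono Λ hA).antisymm (RSet_subset_of_one_mem Λ h1)]

theorem stmt_5 (Λ : ℕ → ℝ) (hmono : StrictMono Λ) (h0 : 0 ≤ Λ 0)
    (htend : Filter.Tendsto Λ Filter.atTop Filter.atTop) (A : Set EReal) (hA : A ⊆ Set.Ici (1 : EReal))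
    (h1 : (1 : EReal) ∈ A) :
    bmDensity Λ A = bmDensity Λ (Set.Ici (1 : EReal)) :=
  stmt_5_general Λ A hA h1
end

section
/- The upper Pólya density is at most the restricted Beurling–Malliavin density: p̄(Λ) ≤ b_{(1,+∞]}(Λ). -/
open Filter Topology

/-- `limsup_{x → ∞} (F_Λ(x) - F_Λ(ξ x)) / (x - ξ x)`, in the extended reals. -/
noncomputable def polyaLimsup (Λ : ℕ → ℝ) (ξ : ℝ) : EReal :=
  Filter.limsup
    (fun x : ℝ => (((countFn Λ x - countFn Λ (ξ * x)) / (x - ξ * x) : ℝ) : EReal))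
    Filter.atTop

/- auxiliary lemmas -/

lemma countFn_nonneg (Λ : ℕ → ℝ) (t : ℝ) : 0 ≤ countFn Λ t := by
  unfold countFn; split <;> positivity

lemma countFn_mono (Λ : ℕ → ℝ) (htend : Filter.Tendsto Λ Filter.atTop Filter.atTop)
    {s t : ℝ} (hst : s ≤ t) : countFn Λ s ≤ countFn Λ t := by
  rcases le_or_gt s 0 with hs | hs
  · rw [countFn, if_neg (not_lt.2 hs)]; exact countFn_nonneg Λ t
  · have ht : 0 < t := hs.trans_le hst
    rw [countFn, if_pos hs, countFn, if_pos ht]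
    have hfin : {k : ℕ | Λ k ≤ t}.Finite := by
      obtain ⟨N, hN⟩ := (htend.eventually (eventually_gt_atTop t)).exists_forall_of_atTop
      exact (Set.finite_Iio N).subset fun k hk => by
        by_contra hkN
        exact absurd (hN k (le_of_not_gt hkN)) (not_lt.2 hk)
    exact_mod_cast Nat.card_mono hfin (fun k hk => le_trans hk hst)

lemma zero_mem_RSet (Λ : ℕ → ℝ) (htend : Filter.Tendsto Λ Filter.atTop Filter.atTop) :
    (0 : ℝ) ∈ RSet Λ (Set.Ioi (1 : EReal)) := by
  refine ⟨le_refl 0, fun n => (2 : ℝ) ^ n, fun n => (2 : ℝ) ^ (n + 1), ⟨?_, ?_⟩, ?_, ?_⟩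
  · intro n
    refine ⟨by positivity, ?_, le_refl _⟩
    exact pow_lt_pow_right₀ one_lt_two (Nat.lt_succ_self n)
  · intro hsum
    have hrw : (fun n : ℕ => ((2:ℝ) ^ (n+1) / 2 ^ n - 1) ^ 2) = fun _ : ℕ => (1 : ℝ) := by
      funext n
      have h2 : (2:ℝ) ^ (n+1) / 2 ^ n = 2 := by
        rw [pow_succ (2:ℝ) n, mul_comm ((2:ℝ)^n) 2, mul_div_assoc, div_self (by positivity : (2:ℝ)^n ≠ 0)]
        ring
      rw [h2]; norm_num
    rw [hrw] at hsum
    haveI := Finite.of_summable_const one_pos hsum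
    exact not_finite ℕ
  · have hrw : (fun n : ℕ => (((2:ℝ) ^ (n+1) / 2 ^ n : ℝ) : EReal)) = fun _ : ℕ => ((2:ℝ) : EReal) := by
      funext n
      congr 1
      rw [pow_succ (2:ℝ) n, mul_comm ((2:ℝ)^n) 2, mul_div_assoc, div_self (by positivity : (2:ℝ)^n ≠ 0)]
      ring
    rw [ratioLimsup, hrw, Filter.limsup_const]
    rw [Set.mem_Ioi]
    exact_mod_cast (by norm_num : (1:ℝ) < 2)
  · filter_upwards with n
    apply div_nonneg
    · rw [sub_nonneg]
      exact countFn_mono Λ htend (le_of_lt (pow_lt_pow_right₀ one_lt_two (Nat.lt_succ_self n)))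
    · rw [sub_nonneg]
      exact le_of_lt (pow_lt_pow_right₀ one_lt_two (Nat.lt_succ_self n))

lemma mem_RSet_of_lt (Λ : ℕ → ℝ) {ξ : ℝ} (hξ0 : 0 < ξ) (hξ1 : ξ < 1) {R : ℝ} (hR : 0 ≤ R)
    (hlt : (R : EReal) < polyaLimsup Λ ξ) : R ∈ RSet Λ (Set.Ioi (1 : EReal)) := by
  set g : ℝ → ℝ := fun x => (countFn Λ x - countFn Λ (ξ * x)) / (x - ξ * x) with hg
  have hfreq : ∃ᶠ x in atTop, R < g x := by
    by_contra hcon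
    rw [Filter.not_frequently] at hcon
    have : polyaLimsup Λ ξ ≤ (R : EReal) :=
      Filter.limsup_le_of_le (by isBoundedDefault)
        (by filter_upwards [hcon] with x hx; exact EReal.coe_le_coe_iff.mpr (not_lt.1 hx))
    exact absurd hlt (not_lt.2 this)
  have key : ∀ M : ℝ, ∃ x, M ≤ x ∧ R < g x := by
    intro M
    obtain ⟨x, hx1, hx2⟩ := (Filter.frequently_atTop.mp hfreq) M
    exact ⟨x, hx1, hx2⟩
  set X : ℕ → ℝ := fun n =>
    Nat.rec (Classical.choose (key 1))
      (fun _ xn => Classical.choose (key (max 1 (xn / ξ)))) n with hX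
  have hX0 : X 0 = Classical.choose (key 1) := rfl
  have hXs : ∀ n, X (n + 1) = Classical.choose (key (max 1 (X n / ξ))) := fun n => rfl
  have h1 : ∀ n, 1 ≤ X n ∧ R < g (X n) := by
    intro n
    cases n with
    | zero => exact Classical.choose_spec (key 1)
    | succ m =>
      obtain ⟨ha, hb⟩ := Classical.choose_spec (key (max 1 (X m / ξ)))
      exact ⟨le_trans (le_max_left _ _) ha, hb⟩
  have h2 : ∀ n, X n / ξ ≤ X (n + 1) := by
    intro n
    obtain ⟨ha, _⟩ := Classical.choose_spec (key (max 1 (X n / ξ)))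
    exact le_trans (le_max_right _ _) ha
  have hXpos : ∀ n, 0 < X n := fun n => lt_of_lt_of_le one_pos (h1 n).1
  refine ⟨hR, fun n => ξ * X n, fun n => X n, ⟨?_, ?_⟩, ?_, ?_⟩
  · intro n
    refine ⟨mul_pos hξ0 (hXpos n), ?_, ?_⟩
    · show ξ * X n < X n
      nth_rewrite 2 [show X n = 1 * X n by ring]
      exact mul_lt_mul_of_pos_right hξ1 (hXpos n)
    · show X n ≤ ξ * X (n + 1)
      have := h2 n
      rw [div_le_iff₀ hξ0] at this
      rw [mul_comm]
      exact this
  · intro hsum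
    have hrw : (fun n : ℕ => (X n / (ξ * X n) - 1) ^ 2) = fun _ : ℕ => (1/ξ - 1) ^ 2 := by
      funext n
      congr 2
      rw [mul_comm, ← div_div, div_self (ne_of_gt (hXpos n))]
    rw [hrw] at hsum
    have hc : 0 < (1/ξ - 1) ^ 2 := by
      have h1d : 1 < 1/ξ := one_lt_one_div hξ0 hξ1
      have : 1/ξ - 1 ≠ 0 := by linarith
      positivity
    haveI := Finite.of_summable_const hc hsum
    exact not_finite ℕ
  · have hrw : (fun n : ℕ => ((X n / (ξ * X n) : ℝ) : EReal)) = fun _ : ℕ => ((1/ξ : ℝ) : EReal) := by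
      funext n
      congr 1
      rw [mul_comm, ← div_div, div_self (ne_of_gt (hXpos n))]
    rw [ratioLimsup, hrw, Filter.limsup_const, Set.mem_Ioi]
    have : (1:ℝ) < 1/ξ := one_lt_one_div hξ0 hξ1
    exact_mod_cast this
  · filter_upwards with n
    exact le_of_lt (h1 n).2

theorem stmt_9 (Λ : ℕ → ℝ) (hmono : StrictMono Λ) (h0 : 0 ≤ Λ 0)
    (htend : Filter.Tendsto Λ Filter.atTop Filter.atTop) (p : EReal)
    (hp : Filter.Tendsto (fun ξ : ℝ => polyaLimsup Λ ξ)
      (nhdsWithin (1 : ℝ) (Set.Ioo (0 : ℝ) 1)) (nhds p)) :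
    p ≤ bmDensity Λ (Set.Ioi (1 : EReal)) := by
  set B := bmDensity Λ (Set.Ioi (1 : EReal)) with hB
  have hBnn : ((0:ℝ) : EReal) ≤ B :=
    le_sSup ⟨0, zero_mem_RSet Λ htend, rfl⟩
  have claim : ∀ ξ ∈ Set.Ioo (0:ℝ) 1, polyaLimsup Λ ξ ≤ B := by
    rintro ξ ⟨hξ0, hξ1⟩
    by_contra hcon
    push_neg at hcon
    obtain ⟨R, hR1, hR2⟩ := EReal.exists_between_coe_real hcon
    have hRnn : (0:ℝ) ≤ R := by
      have : ((0:ℝ):EReal) < (R:EReal) := lt_of_le_of_lt hBnn hR1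
      exact_mod_cast le_of_lt this
    have hmem := mem_RSet_of_lt Λ hξ0 hξ1 hRnn hR2
    have : (R : EReal) ≤ B := le_sSup ⟨R, hmem, rfl⟩
    exact absurd hR1 (not_lt.2 this)
  haveI : (nhdsWithin (1:ℝ) (Set.Ioo 0 1)).NeBot := by
    apply mem_closure_iff_nhdsWithin_neBot.mp
    rw [closure_Ioo (by norm_num : (0:ℝ) ≠ 1)]
    exact ⟨zero_le_one, le_refl 1⟩
  exact le_of_tendsto hp (Filter.eventually_of_mem self_mem_nhdsWithin claim)
end

section
/- Fix η ∈ (0,1), x > 0, and an integer q ≥ 1, and suppose x ≥ r(q) where r(t) = (1 − η^{t+1})/(η^{t−1}(1−η)²). With b_i = f^i(⌈x⌉) and a_i = η b_i for i ≥ 0 (where f(y) = ⌈ηy⌉), the following inequalities hold for every i = 1, …, q: η^{i+1}x ≤ a_i ≤ η^i x ≤ a_{i−1} ≤ b_i ≤ η^{i−1}x ≤ b_{i−1}. -/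
open Filter Topology

/-- `seqB η x i = f^i(⌈x⌉)` where `f(y) = ⌈η y⌉`. -/
noncomputable def seqB (η x : ℝ) (i : ℕ) : ℝ :=
  (fun y : ℝ => ((⌈η * y⌉ : ℤ) : ℝ))^[i] ((⌈x⌉ : ℤ) : ℝ)

/-- `seqA η x i = η * seqB η x i`. -/
noncomputable def seqA (η x : ℝ) (i : ℕ) : ℝ := η * seqB η x i

theorem stmt_13 (η x : ℝ) (hη : η ∈ Set.Ioo (0 : ℝ) 1) (hx : 0 < x)
    (q : ℕ) (hq : 1 ≤ q)
    (hxr : (1 - η ^ (q + 1)) / (η ^ (q - 1) * (1 - η) ^ 2) ≤ x) :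
    ∀ i : ℕ, 1 ≤ i → i ≤ q →
      η ^ (i + 1) * x ≤ seqA η x i ∧
      seqA η x i ≤ η ^ i * x ∧
      η ^ i * x ≤ seqA η x (i - 1) ∧
      seqA η x (i - 1) ≤ seqB η x i ∧
      seqB η x i ≤ η ^ (i - 1) * x ∧
      η ^ (i - 1) * x ≤ seqB η x (i - 1) := by
  obtain ⟨hη0, hη1⟩ := hη
  have h1 : (0:ℝ) < 1 - η := by linarith
  have hb : ∀ i, seqB η x (i+1) = ((⌈η * seqB η x i⌉ : ℤ) : ℝ) := by
    intro i; simp [seqB, Function.iterate_succ_apply']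
  have hA : ∀ i, η ^ i * x ≤ seqB η x i := by
    intro i
    induction i with
    | zero => simpa [seqB] using Int.le_ceil x
    | succ n ih =>
      rw [hb]
      calc η ^ (n+1) * x = η * (η ^ n * x) := by ring
        _ ≤ η * seqB η x n := by nlinarith
        _ ≤ _ := Int.le_ceil _
  have hBnd : ∀ i, seqB η x i ≤ η ^ i * x + (1 - η ^ (i+1)) / (1 - η) := by
    intro i
    induction i with
    | zero =>
      have h2 := Int.ceil_lt_add_one x
      have h3 : (1 - η ^ (0+1)) / (1 - η) = 1 := by
        rw [pow_one]; field_simp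
      have h4 : seqB η x 0 = ((⌈x⌉ : ℤ) : ℝ) := rfl
      rw [h4, h3]
      simpa using h2.le
    | succ n ih =>
      rw [hb]
      have h2 := (Int.ceil_lt_add_one (η * seqB η x n)).le
      have h3 : η * ((1 - η ^ (n+1)) / (1 - η)) + 1 = (1 - η ^ (n+1+1)) / (1 - η) := by
        field_simp; ring
      have h4 : η * seqB η x n ≤ η * (η ^ n * x + (1 - η ^ (n+1)) / (1 - η)) := by
        nlinarith
      calc ((⌈η * seqB η x n⌉ : ℤ) : ℝ) ≤ η * seqB η x n + 1 := h2
        _ ≤ η * (η ^ n * x + (1 - η ^ (n+1)) / (1 - η)) + 1 := by linarith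
        _ = η ^ (n+1) * x + (1 - η ^ (n+1+1)) / (1 - η) := by rw [← h3]; ring
  intro i hi1 hiq
  obtain ⟨k, rfl⟩ : ∃ k, q = k + 1 := ⟨q - 1, by omega⟩
  obtain ⟨j, rfl⟩ : ∃ j, i = j + 1 := ⟨i - 1, by omega⟩
  have hjk : j ≤ k := by omega
  -- key: x ≥ r(q) implies the multiplied inequality at level j
  have hxr' : 1 - η ^ (k+2) ≤ x * (η ^ k * (1 - η)^2) := by
    have hpos : 0 < η ^ k * (1 - η)^2 := by positivity
    have hxr2 : (1 - η ^ (k+2)) / (η ^ k * (1 - η)^2) ≤ x := by simpa using hxr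
    exact (div_le_iff₀ hpos).mp hxr2
  have hmono : η ^ (k+2) ≤ η ^ (j+2) :=
    pow_le_pow_of_le_one hη0.le hη1.le (by omega)
  have hmono2 : η ^ k ≤ η ^ j :=
    pow_le_pow_of_le_one hη0.le hη1.le hjk
  have hr : (1 - η ^ (j+2)) ≤ η ^ j * (1 - η)^2 * x := by
    have h5 : x * (η ^ k * (1 - η)^2) ≤ x * (η ^ j * (1 - η)^2) := by
      apply mul_le_mul_of_nonneg_left _ hx.le
      apply mul_le_mul_of_nonneg_right hmono2 (by positivity)
    nlinarith
  have hKey : seqB η x (j+1) ≤ η ^ j * x := by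
    have h6 := hBnd (j+1)
    have h7 : (1 - η ^ (j+1+1)) / (1 - η) ≤ η ^ j * (1 - η) * x := by
      rw [div_le_iff₀ h1]
      calc 1 - η ^ (j+1+1) = 1 - η ^ (j+2) := by norm_num
        _ ≤ η ^ j * (1 - η)^2 * x := hr
        _ = η ^ j * (1 - η) * x * (1 - η) := by ring
    have h8 : η ^ (j+1) * x + η ^ j * (1 - η) * x = η ^ j * x := by
      rw [pow_succ]; ring
    linarith
  have hBj := hA j
  have hBj1 := hA (j+1)
  have hstep : seqA η x j ≤ seqB η x (j+1) := by
    rw [hb]; exact Int.le_ceil _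
  refine ⟨?_, ?_, ?_, ?_, ?_, ?_⟩
  · simp only [seqA]
    calc η ^ (j+1+1) * x = η * (η ^ (j+1) * x) := by ring
      _ ≤ η * seqB η x (j+1) := by nlinarith
  · simp only [seqA]
    calc η * seqB η x (j+1) ≤ η * (η ^ j * x) :=
          mul_le_mul_of_nonneg_left hKey hη0.le
      _ = η ^ (j+1) * x := by rw [pow_succ]; ring
  · simp only [seqA, Nat.add_sub_cancel]
    calc η ^ (j+1) * x = η * (η ^ j * x) := by ring
      _ ≤ η * seqB η x j := by nlinarith
  · simpa using hstep
  · simpa using hKey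
  · simpa using hBj
end

section
/- Let ξ ∈ (0,1) and η ∈ (ξ,1) be fixed, and assume x ≥ r(q) for some integer q ≥ (log ξ)/(log η). Then the set {i ≥ 0 : a_i > ξx} is a finite initial segment of the nonnegative integers, namely {0, 1, …, d−1} for some integer d with 1 ≤ d ≤ q. -/
open Filter Topology

lemma seqB_zero (η x : ℝ) : seqB η x 0 = ((⌈x⌉ : ℤ) : ℝ) := rfl

lemma seqB_succ (η x : ℝ) (i : ℕ) :
    seqB η x (i + 1) = ((⌈η * seqB η x i⌉ : ℤ) : ℝ) := by
  simp [seqB, Function.iterate_succ_apply']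

lemma seqB_int (η x : ℝ) (i : ℕ) : ∃ n : ℤ, seqB η x i = (n : ℝ) := by
  induction i with
  | zero => exact ⟨⌈x⌉, rfl⟩
  | succ i ih => exact ⟨⌈η * seqB η x i⌉, seqB_succ η x i⟩

lemma seqB_one_le (η x : ℝ) (hη0 : 0 < η) (hx : 0 < x) (i : ℕ) :
    1 ≤ seqB η x i := by
  induction i with
  | zero =>
    rw [seqB_zero]
    exact_mod_cast Int.one_le_ceil_iff.mpr hx
  | succ i ih =>
    rw [seqB_succ]
    have : (0 : ℝ) < η * seqB η x i := mul_pos hη0 (by linarith)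
    exact_mod_cast Int.ceil_pos.mpr this

lemma seqB_antitone_step (η x : ℝ) (hη0 : 0 < η) (hη1 : η < 1) (hx : 0 < x) (i : ℕ) :
    seqB η x (i + 1) ≤ seqB η x i := by
  obtain ⟨n, hn⟩ := seqB_int η x i
  have h1 : 1 ≤ seqB η x i := seqB_one_le η x hη0 hx i
  rw [seqB_succ, hn]
  have : η * (n : ℝ) ≤ (n : ℝ) := by nlinarith [hn ▸ h1]
  exact_mod_cast Int.ceil_le.mpr this

lemma seqB_anti (η x : ℝ) (hη0 : 0 < η) (hη1 : η < 1) (hx : 0 < x) :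
    Antitone (seqB η x) := by
  apply antitone_nat_of_succ_le
  intro i
  exact seqB_antitone_step η x hη0 hη1 hx i

lemma seqB_upper (η x : ℝ) (hη0 : 0 < η) (hη1 : η < 1) (i : ℕ) :
    seqB η x i ≤ η ^ i * x + (1 - η ^ (i + 1)) / (1 - η) := by
  have hD : (0 : ℝ) < 1 - η := by linarith
  induction i with
  | zero =>
    rw [seqB_zero]
    have := Int.ceil_lt_add_one x
    have : ((⌈x⌉ : ℤ) : ℝ) ≤ x + 1 := by linarith
    calc ((⌈x⌉ : ℤ) : ℝ) ≤ x + 1 := this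
      _ = η ^ 0 * x + (1 - η ^ 1) / (1 - η) := by
          field_simp
  | succ i ih =>
    rw [seqB_succ]
    have h1 : ((⌈η * seqB η x i⌉ : ℤ) : ℝ) ≤ η * seqB η x i + 1 := by
      have := Int.ceil_lt_add_one (η * seqB η x i)
      linarith
    have h2 : η * seqB η x i ≤ η * (η ^ i * x + (1 - η ^ (i + 1)) / (1 - η)) :=
      mul_le_mul_of_nonneg_left ih hη0.le
    have h3 : η * (η ^ i * x + (1 - η ^ (i + 1)) / (1 - η)) + 1
        = η ^ (i + 1) * x + (1 - η ^ (i + 2)) / (1 - η) := by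
      field_simp
      ring
    linarith

theorem stmt_14 (ξ η x : ℝ) (hξ : ξ ∈ Set.Ioo (0 : ℝ) 1) (hη : η ∈ Set.Ioo ξ 1)
    (q : ℕ) (hq : Real.log ξ / Real.log η ≤ (q : ℝ))
    (hxr : (1 - η ^ (q + 1)) / (η ^ (q - 1) * (1 - η) ^ 2) ≤ x) :
    ∃ d : ℕ, 1 ≤ d ∧ d ≤ q ∧ ∀ i : ℕ, (ξ * x < seqA η x i ↔ i < d) := by
  obtain ⟨hξ0, hξ1⟩ := hξ
  obtain ⟨hξη, hη1⟩ := hη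
  have hη0 : 0 < η := hξ0.trans hξη
  have hlogη : Real.log η < 0 := Real.log_neg hη0 hη1
  have hlogξ : Real.log ξ < 0 := Real.log_neg hξ0 hξ1
  have hq1 : 1 ≤ q := by
    rcases Nat.eq_zero_or_pos q with h | h
    · exfalso
      subst h
      have : 0 < Real.log ξ / Real.log η := div_pos_of_neg_of_neg hlogξ hlogη
      simp at hq
      linarith
    · exact h
  obtain ⟨p, rfl⟩ : ∃ p, q = p + 1 := ⟨q - 1, by omega⟩
  have hsub : p + 1 - 1 = p := by omega
  rw [hsub] at hxr
  have hηqξ : η ^ (p + 1) ≤ ξ := by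
    have h1 : ((p + 1 : ℕ) : ℝ) * Real.log η ≤ Real.log ξ := by
      rwa [div_le_iff_of_neg hlogη] at hq
    calc η ^ (p + 1) = Real.exp (((p + 1 : ℕ) : ℝ) * Real.log η) := by
          rw [← Real.log_pow, Real.exp_log (pow_pos hη0 _)]
      _ ≤ Real.exp (Real.log ξ) := Real.exp_le_exp.mpr h1
      _ = ξ := Real.exp_log hξ0
  have hD : (0 : ℝ) < 1 - η := by linarith
  have hP : (0 : ℝ) < η ^ p := pow_pos hη0 p
  have hA : (0 : ℝ) < 1 - η ^ (p + 1 + 1) := by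
    have : η ^ (p + 1 + 1) < 1 := pow_lt_one₀ hη0.le hη1 (by omega)
    linarith
  have hr : (0 : ℝ) < (1 - η ^ (p + 1 + 1)) / (η ^ p * (1 - η) ^ 2) :=
    div_pos hA (by positivity)
  have hx0 : 0 < x := hr.trans_le hxr
  -- a_0 > ξ x
  have ha0 : ξ * x < seqA η x 0 := by
    have hb0 : x ≤ seqB η x 0 := by
      rw [seqB_zero]; exact_mod_cast Int.le_ceil x
    have : ξ * x < η * x := by nlinarith
    have : η * x ≤ η * seqB η x 0 := mul_le_mul_of_nonneg_left hb0 hη0.le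
    unfold seqA
    linarith
  -- a_{p+1} ≤ ξ x
  have haq : seqA η x (p + 1) ≤ ξ * x := by
    have hb := seqB_upper η x hη0 hη1 (p + 1)
    have h2 : seqA η x (p + 1)
        ≤ η * (η ^ (p + 1) * x + (1 - η ^ (p + 1 + 1)) / (1 - η)) := by
      unfold seqA
      exact mul_le_mul_of_nonneg_left hb hη0.le
    have key : η * (η ^ (p + 1) * x + (1 - η ^ (p + 1 + 1)) / (1 - η)) ≤ ξ * x := by
      have h3 : η ^ (p + 1) * (1 - η) * ((1 - η ^ (p + 1 + 1)) / (η ^ p * (1 - η) ^ 2))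
          ≤ η ^ (p + 1) * (1 - η) * x := by
        apply mul_le_mul_of_nonneg_left hxr (by positivity)
      have h4 : η ^ (p + 1) * (1 - η) * ((1 - η ^ (p + 1 + 1)) / (η ^ p * (1 - η) ^ 2))
          = η * ((1 - η ^ (p + 1 + 1)) / (1 - η)) := by
        field_simp
        ring
      rw [h4] at h3
      have h5 : (η ^ (p + 1) - η ^ (p + 1 + 1)) * x ≤ (ξ - η ^ (p + 1 + 1)) * x := by
        apply mul_le_mul_of_nonneg_right _ hx0.le
        linarith
      have h6 : η ^ (p + 1) * (1 - η) * x = (η ^ (p + 1) - η ^ (p + 1 + 1)) * x := by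
        ring
      nlinarith [h3, h5]
    linarith
  -- a is antitone
  have hanti : Antitone (seqA η x) := by
    intro i j hij
    unfold seqA
    exact mul_le_mul_of_nonneg_left (seqB_anti η x hη0 hη1 hx0 hij) hη0.le
  -- define d
  have hne : ∃ i, seqA η x i ≤ ξ * x := ⟨p + 1, haq⟩
  classical
  set d := Nat.find hne with hd
  have hdspec : seqA η x d ≤ ξ * x := Nat.find_spec hne
  have hdmin : ∀ i < d, ¬ seqA η x i ≤ ξ * x := fun i hi => Nat.find_min hne hi
  refine ⟨d, ?_, ?_, ?_⟩
  · rcases Nat.eq_zero_or_pos d with h | h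
    · exfalso; rw [h] at hdspec; linarith
    · exact h
  · exact Nat.find_le haq
  · intro i
    constructor
    · intro hi
      by_contra h
      push_neg at h
      have := hanti h
      linarith
    · intro hi
      have := hdmin i hi
      push_neg at this
      exact this
end

section
/- Let ξ ∈ (0,1) and η ∈ (ξ,1) be fixed. Then there exists M = M(ξ,η) > 0 such that for every real x > M there exists a positive integer n with (F_Λ(n) − F_Λ(ηn))/((1−η)n) ≥ (F_Λ(x) − F_Λ(ξx))/((1 − ξη³)x). -/
open Filter Topology

/-!
Iterating `n ↦ ⌈η n⌉` from `n₀ = ⌈x⌉` gives intervals `(η nⱼ, nⱼ]` that chain together and, for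
`j ≤ K`, cover `(ξ x, x]` as soon as `η^(K+1) < ξ` and `x` is large; their total length
`(1 - η) Σ nⱼ` exceeds `(1 - η^(K+1)) x` by at most `K + 1`. Taking `K` minimal gives
`η^(K+1) ≥ ξ η > ξ η³`, so for large `x` the total length is at most `(1 - ξ η³) x`. Since
`F_Λ(x) - F_Λ(ξ x)` is at most the sum of the counts in the covering intervals, the mediant
inequality yields one interval whose count-to-length ratio is at least the claimed bound.
-/

lemma countFn_mono_s17 {Λ : ℕ → ℝ} (htend : Tendsto Λ atTop atTop) : Monotone (countFn Λ) := by
  intro s t hst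
  unfold countFn
  split_ifs with hs ht ht
  · have hfin : {k : ℕ | Λ k ≤ t}.Finite := by
      simpa [← Nat.cofinite_eq_atTop] using htend.eventually_gt_atTop t
    rw [Nat.card_coe_set_eq, Nat.card_coe_set_eq]
    exact_mod_cast Set.ncard_le_ncard (fun k hk => le_trans hk hst) hfin
  · exact absurd (hs.trans_le hst) ht
  · positivity
  · exact le_rfl

theorem Finset.exists_div_sum_le_div {ι 𝕜 : Type*} [Field 𝕜] [LinearOrder 𝕜]
    [IsStrictOrderedRing 𝕜] {s : Finset ι} (hs : s.Nonempty) {g d : ι → 𝕜}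
    (hd : ∀ i ∈ s, 0 < d i) : ∃ i ∈ s, (∑ j ∈ s, g j) / (∑ j ∈ s, d j) ≤ g i / d i := by
  have hD : 0 < ∑ j ∈ s, d j := Finset.sum_pos hd hs
  obtain ⟨i, hi, h⟩ := Finset.exists_le_of_sum_le hs
    (f := fun i => (∑ j ∈ s, g j) / (∑ j ∈ s, d j) * d i) (g := g)
    (by rw [← Finset.mul_sum, div_mul_cancel₀ _ hD.ne'])
  exact ⟨i, hi, (le_div_iff₀ (hd i hi)).2 h⟩

lemma sub_le_sum_sub_of_le_succ {α β : Type*} [Preorder α] [AddCommGroup β] [PartialOrder β]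
    [IsOrderedAddMonoid β] {F : α → β} (hF : Monotone F) {a b : ℕ → α}
    (hab : ∀ j, a j ≤ b (j + 1)) (m : ℕ) :
    F (b 0) - F (a m) ≤ ∑ j ∈ Finset.range (m + 1), (F (b j) - F (a j)) := by
  induction m with
  | zero => simp
  | succ m ih =>
    calc F (b 0) - F (a (m + 1))
        = (F (b 0) - F (a m)) + (F (a m) - F (a (m + 1))) := by abel
      _ ≤ _ := by
        rw [Finset.sum_range_succ]
        exact add_le_add ih (sub_le_sub_right (hF (hab m)) _)

noncomputable def ceilIter (η x : ℝ) : ℕ → ℕ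
  | 0 => ⌈x⌉₊
  | j + 1 => ⌈η * ceilIter η x j⌉₊

section ceilIter

variable {η x : ℝ}

lemma le_ceilIter_succ (j : ℕ) : η * ceilIter η x j ≤ ceilIter η x (j + 1) :=
  Nat.le_ceil _

lemma pow_mul_le_ceilIter (hη : 0 ≤ η) (j : ℕ) : η ^ j * x ≤ ceilIter η x j := by
  induction j with
  | zero => simpa [ceilIter] using Nat.le_ceil x
  | succ j ih =>
    calc η ^ (j + 1) * x = η * (η ^ j * x) := by ring
      _ ≤ η * ceilIter η x j := mul_le_mul_of_nonneg_left ih hη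
      _ ≤ ceilIter η x (j + 1) := le_ceilIter_succ j

/-- Each rounding adds less than `1`, and the accumulated errors form a geometric series. -/
lemma ceilIter_le (hη0 : 0 ≤ η) (hη1 : η < 1) (hx : 0 ≤ x) (j : ℕ) :
    ceilIter η x j ≤ η ^ j * x + 1 / (1 - η) := by
  have hη : 0 < 1 - η := by linarith
  induction j with
  | zero =>
    have h1 : 1 ≤ 1 / (1 - η) := by rw [le_div_iff₀ hη]; linarith
    simp only [ceilIter, pow_zero, one_mul]
    linarith [Nat.ceil_lt_add_one hx]
  | succ j ih =>
    have hstep : (ceilIter η x (j + 1) : ℝ) < η * ceilIter η x j + 1 :=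
      Nat.ceil_lt_add_one (by positivity)
    have hgeom : η * (1 / (1 - η)) + 1 = 1 / (1 - η) := by field_simp; ring
    calc (ceilIter η x (j + 1) : ℝ) ≤ η * (η ^ j * x + 1 / (1 - η)) + 1 := by
          nlinarith [mul_le_mul_of_nonneg_left ih hη0]
      _ = η ^ (j + 1) * x + 1 / (1 - η) := by rw [mul_add, add_assoc, hgeom]; ring

lemma sum_ceilIter_le (hη0 : 0 ≤ η) (hη1 : η < 1) (hx : 0 ≤ x) (m : ℕ) :
    ∑ j ∈ Finset.range m, (1 - η) * ceilIter η x j ≤ (1 - η ^ m) * x + m := by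
  have hη : 0 < 1 - η := by linarith
  calc ∑ j ∈ Finset.range m, (1 - η) * ceilIter η x j
      ≤ ∑ j ∈ Finset.range m, ((1 - η) * η ^ j * x + 1) := by
        refine Finset.sum_le_sum fun j _ => ?_
        have := mul_le_mul_of_nonneg_left (ceilIter_le hη0 hη1 hx j) hη.le
        rwa [mul_add, mul_one_div_cancel hη.ne', ← mul_assoc] at this
    _ = (1 - η ^ m) * x + m := by
        rw [Finset.sum_add_distrib, ← Finset.sum_mul, ← Finset.mul_sum, mul_comm (1 - η),
          geom_sum_mul_neg]
        simp

end ceilIter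

lemma exists_pow_succ_mem_Ico {ξ η : ℝ} (hξ0 : 0 < ξ) (hξ1 : ξ ≤ 1) (hη0 : 0 < η) (hη1 : η < 1) :
    ∃ K : ℕ, ξ * η ≤ η ^ (K + 1) ∧ η ^ (K + 1) < ξ := by
  classical
  have hex : ∃ K : ℕ, η ^ (K + 1) < ξ := by
    obtain ⟨K, hK⟩ := exists_pow_lt_of_lt_one hξ0 hη1
    exact ⟨K, (pow_lt_pow_right_of_lt_one₀ hη0 hη1 K.lt_succ_self).trans hK⟩
  refine ⟨Nat.find hex, ?_, Nat.find_spec hex⟩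
  rw [pow_succ]
  refine mul_le_mul_of_nonneg_right ?_ hη0.le
  rcases Nat.eq_zero_or_eq_succ_pred (Nat.find hex) with h | h
  · rw [h, pow_zero]; exact hξ1
  · rw [h]; exact not_lt.1 (Nat.find_min hex (h ▸ Nat.pred_lt_self (by omega)))

lemma exists_nat_ratio_ge {F : ℝ → ℝ} (hF : Monotone F) {ξ η x D : ℝ} (hη0 : 0 < η)
    (hη1 : η < 1) (hx : 0 < x) (K : ℕ) (hcover : η ^ (K + 1) * x + η / (1 - η) ≤ ξ * x)
    (hlen : (1 - η ^ (K + 1)) * x + (K + 1) ≤ D) :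
    ∃ n : ℕ, 0 < n ∧ (F x - F (ξ * x)) / D ≤ (F n - F (η * n)) / ((1 - η) * n) := by
  set n := ceilIter η x
  have hpos (j : ℕ) : (0 : ℝ) < n j :=
    (by positivity : 0 < η ^ j * x).trans_le (pow_mul_le_ceilIter hη0.le j)
  have hdpos (j : ℕ) : 0 < (1 - η) * n j := mul_pos (sub_pos.2 hη1) (hpos j)
  have hs : (Finset.range (K + 1)).Nonempty := Finset.nonempty_range_add_one
  have hden_pos : 0 < ∑ j ∈ Finset.range (K + 1), (1 - η) * n j :=
    Finset.sum_pos (fun j _ => hdpos j) hs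
  have hnum : F x - F (ξ * x) ≤ ∑ j ∈ Finset.range (K + 1), (F (n j) - F (η * n j)) := by
    have htop : F x ≤ F (n 0) := hF (Nat.le_ceil x)
    have hbot : F (η * n K) ≤ F (ξ * x) := hF <| by
      have := mul_le_mul_of_nonneg_left (ceilIter_le hη0.le hη1 hx.le K) hη0.le
      rw [mul_add, ← mul_assoc, ← pow_succ', mul_one_div] at this
      linarith
    linarith [sub_le_sum_sub_of_le_succ hF (a := fun j => η * n j) (b := fun j => n j)
      le_ceilIter_succ K]
  have hnum_nonneg : 0 ≤ ∑ j ∈ Finset.range (K + 1), (F (n j) - F (η * n j)) :=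
    Finset.sum_nonneg fun j _ => sub_nonneg.2 (hF (mul_le_of_le_one_left (hpos j).le hη1.le))
  have hden : ∑ j ∈ Finset.range (K + 1), (1 - η) * n j ≤ D := by
    have := sum_ceilIter_le hη0.le hη1 hx.le (K + 1)
    push_cast at this
    linarith
  obtain ⟨j, -, hj⟩ := Finset.exists_div_sum_le_div hs (g := fun j => F (n j) - F (η * n j))
    fun j _ => hdpos j
  refine ⟨n j, by exact_mod_cast hpos j, le_trans ?_ hj⟩
  calc (F x - F (ξ * x)) / D
      ≤ (∑ j ∈ Finset.range (K + 1), (F (n j) - F (η * n j))) / D :=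
        div_le_div_of_nonneg_right hnum (hden_pos.le.trans hden)
    _ ≤ _ := div_le_div_of_nonneg_left hnum_nonneg hden_pos hden

theorem stmt_17_general (Λ : ℕ → ℝ)
    (htend : Filter.Tendsto Λ Filter.atTop Filter.atTop) (ξ η : ℝ) (hξ : ξ ∈ Set.Ioo (0 : ℝ) 1) (hη : η ∈ Set.Ioo ξ 1) :
    ∃ M : ℝ, 0 < M ∧ ∀ x : ℝ, M < x → ∃ n : ℕ, 0 < n ∧
      (countFn Λ x - countFn Λ (ξ * x)) / ((1 - ξ * η ^ 3) * x) ≤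
        (countFn Λ (n : ℝ) - countFn Λ (η * (n : ℝ))) / ((1 - η) * (n : ℝ)) := by
  obtain ⟨hξ0, hξ1⟩ := hξ
  obtain ⟨hξη, hη1⟩ := hη
  have hη0 : 0 < η := hξ0.trans hξη
  obtain ⟨K, hKlo, hKhi⟩ := exists_pow_succ_mem_Ico hξ0 hξ1.le hη0 hη1
  have hgap : ξ * η ^ 3 < η ^ (K + 1) := lt_of_lt_of_le
    (mul_lt_mul_of_pos_left (pow_lt_self_of_lt_one₀ hη0 hη1 (by norm_num)) hξ0) hKlo
  have hlarge : ∀ᶠ x in atTop, 0 < x ∧ η / (1 - η) ≤ (ξ - η ^ (K + 1)) * x ∧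
      (K + 1 : ℝ) ≤ (η ^ (K + 1) - ξ * η ^ 3) * x :=
    (eventually_gt_atTop 0).and <|
      ((tendsto_id.const_mul_atTop (sub_pos.2 hKhi)).eventually_ge_atTop _).and
        ((tendsto_id.const_mul_atTop (sub_pos.2 hgap)).eventually_ge_atTop _)
  obtain ⟨M, hM⟩ := hlarge.exists_forall_of_atTop
  refine ⟨max M 1, by positivity, fun x hx => ?_⟩
  obtain ⟨hx0, hcover, hlen⟩ := hM x ((le_max_left M 1).trans hx.le)
  exact exists_nat_ratio_ge (countFn_mono_s17 htend) hη0 hη1 hx0 K (by linarith) (by linarith)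

theorem stmt_17 (Λ : ℕ → ℝ) (hmono : StrictMono Λ) (h0 : 0 ≤ Λ 0)
    (htend : Filter.Tendsto Λ Filter.atTop Filter.atTop) (ξ η : ℝ) (hξ : ξ ∈ Set.Ioo (0 : ℝ) 1) (hη : η ∈ Set.Ioo ξ 1) :
    ∃ M : ℝ, 0 < M ∧ ∀ x : ℝ, M < x → ∃ n : ℕ, 0 < n ∧
      (countFn Λ x - countFn Λ (ξ * x)) / ((1 - ξ * η ^ 3) * x) ≤
        (countFn Λ (n : ℝ) - countFn Λ (η * (n : ℝ))) / ((1 - η) * (n : ℝ)) :=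
  stmt_17_general Λ htend ξ η hξ hη
end
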